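/- Let F(D_r p) = ⟨D_r p, C⟩ + 2‖C‖_∞ ‖c(D_r p) − c‖₁ be the penalized OT objective over row-stochastic matrices p. If p* minimizes F, then π̃ = Round(D_r p*, r, c) ∈ Π(r,c) satisfies F(π̃) ≤ F(D_r p*); hence there exist minimizers of the penalized problem that are feasible couplings. -/

import Mathlib

noncomputable def rowSum {n : ℕ} (π : Fin n → Fin n → ℝ) (i : Fin n) : ℝ := ∑ j, π i j
noncomputable def colSum {n : ℕ} (π : Fin n → Fin n → ℝ) (j : Fin n) : ℝ := ∑ i, π i j

/-- The Altschuler–Weed–Rigollet rounding procedure. -/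
noncomputable def roundPlan {n : ℕ} (π : Fin n → Fin n → ℝ) (r c : Fin n → ℝ) :
    Fin n → Fin n → ℝ :=
  let π' : Fin n → Fin n → ℝ := fun i j => min (r i / rowSum π i) 1 * π i j
  let π'' : Fin n → Fin n → ℝ := fun i j => π' i j * min (c j / colSum π' j) 1
  let δr : Fin n → ℝ := fun i => r i - rowSum π'' i
  let δc : Fin n → ℝ := fun j => c j - colSum π'' j
  fun i j => π'' i j + (∑ i', |δr i'|)⁻¹ * δr i * δc j

/-!
Write `π = D_r p`. Its row marginals are already `r`, so the row scaling of `Round` does nothing;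
the column scaling removes exactly the mass by which `c(π)` exceeds `c`, and the rank-one
correction adds back exactly the mass by which `c` exceeds the scaled marginal. Hence
`‖Round(π) - π‖₁ ≤ ‖c(π) - c‖₁`, and Hölder's inequality gives
`⟨Round(π), C⟩ ≤ ⟨π, C⟩ + ‖C‖_∞ ‖c(π) - c‖₁ ≤ F(π)`.
-/

open Finset

theorem inv_mul_mul_of_nonneg_of_le {a x : ℝ} (hx : 0 ≤ x) (hxa : x ≤ a) : a⁻¹ * a * x = x := by
  rcases eq_or_ne a 0 with rfl | ha
  · simp [le_antisymm hxa hx]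
  · rw [inv_mul_cancel₀ ha, one_mul]

theorem sum_sum_mul_le_add_mul_sum_sum_abs {ι κ : Type*} [Fintype ι] [Fintype κ]
    {C : ι → κ → ℝ} {K : ℝ} (hC : ∀ i j, |C i j| ≤ K) (A B : ι → κ → ℝ) :
    ∑ i, ∑ j, A i j * C i j ≤ ∑ i, ∑ j, B i j * C i j + K * ∑ i, ∑ j, |A i j - B i j| := by
  simp only [mul_sum, ← sum_add_distrib]
  gcongr with i _ j _
  have hHolder : (A i j - B i j) * C i j ≤ |A i j - B i j| * K :=
    calc (A i j - B i j) * C i j ≤ |(A i j - B i j) * C i j| := le_abs_self _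
      _ = |A i j - B i j| * |C i j| := abs_mul _ _
      _ ≤ |A i j - B i j| * K := by gcongr; exact hC i j
  linarith

section

variable {n : ℕ} {π : Fin n → Fin n → ℝ} {r c : Fin n → ℝ}

theorem colSum_swap (π : Fin n → Fin n → ℝ) : colSum (Function.swap π) = rowSum π := rfl

theorem rowSum_nonneg (hπ : ∀ i j, 0 ≤ π i j) (i : Fin n) :
    0 ≤ rowSum π i :=
  sum_nonneg fun j _ => hπ i j

theorem rowSum_mono {π' : Fin n → Fin n → ℝ} (h : ∀ i j, π i j ≤ π' i j) (i : Fin n) :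
    rowSum π i ≤ rowSum π' i :=
  sum_le_sum fun j _ => h i j

theorem sum_rowSum_eq_sum_colSum (π : Fin n → Fin n → ℝ) :
    ∑ i, rowSum π i = ∑ j, colSum π j :=
  sum_comm

theorem sum_sum_abs_sub_of_le {P : Fin n → Fin n → ℝ} (h : ∀ i j, P i j ≤ π i j) :
    ∑ i, ∑ j, |π i j - P i j| = ∑ j, (colSum π j - colSum P j) := by
  simp only [colSum, ← sum_sub_distrib, abs_of_nonneg (sub_nonneg.2 (h _ _))]
  exact sum_comm

noncomputable def rowScale (π : Fin n → Fin n → ℝ) (r : Fin n → ℝ) : Fin n → Fin n → ℝ :=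
  fun i j => min (r i / rowSum π i) 1 * π i j

noncomputable def colScale (π : Fin n → Fin n → ℝ) (c : Fin n → ℝ) : Fin n → Fin n → ℝ :=
  fun i j => π i j * min (c j / colSum π j) 1

theorem rowScale_nonneg (hπ : ∀ i j, 0 ≤ π i j) (hr : ∀ i, 0 ≤ r i) (i j : Fin n) :
    0 ≤ rowScale π r i j :=
  mul_nonneg (le_min (div_nonneg (hr i) (rowSum_nonneg hπ i)) zero_le_one) (hπ i j)

theorem rowScale_le (hπ : ∀ i j, 0 ≤ π i j) (i j : Fin n) : rowScale π r i j ≤ π i j :=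
  mul_le_of_le_one_left (hπ i j) (min_le_right _ _)

theorem rowSum_rowScale (hπ : ∀ i j, 0 ≤ π i j) (hr : ∀ i, 0 ≤ r i) (i : Fin n) :
    rowSum (rowScale π r) i = min (r i) (rowSum π i) := by
  have hfactor : rowSum (rowScale π r) i = min (r i / rowSum π i) 1 * rowSum π i := by
    simp only [rowSum, rowScale, mul_sum]
  rcases (rowSum_nonneg hπ i).eq_or_lt with h | h
  · rw [hfactor, ← h, mul_zero, min_eq_right (hr i)]
  · rw [hfactor, min_mul_of_nonneg _ _ h.le, div_mul_cancel₀ _ h.ne', one_mul]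

theorem rowScale_eq_self (hπ : ∀ i j, 0 ≤ π i j) (hr : ∀ i, rowSum π i ≤ r i) :
    rowScale π r = π := by
  funext i j
  rcases (rowSum_nonneg hπ i).eq_or_lt with h | h
  · have hzero : π i j = 0 :=
      (sum_eq_zero_iff_of_nonneg fun j _ => hπ i j).1 h.symm j (mem_univ j)
    simp [rowScale, hzero]
  · rw [rowScale, min_eq_right ((one_le_div h).2 (hr i)), one_mul]

theorem colScale_eq_swap_rowScale_swap (π : Fin n → Fin n → ℝ) (c : Fin n → ℝ) :
    colScale π c = Function.swap (rowScale (Function.swap π) c) := by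
  funext i j
  exact mul_comm _ _

theorem colScale_nonneg (hπ : ∀ i j, 0 ≤ π i j) (hc : ∀ j, 0 ≤ c j) (i j : Fin n) :
    0 ≤ colScale π c i j := by
  rw [colScale_eq_swap_rowScale_swap]
  exact rowScale_nonneg (fun j i => hπ i j) hc j i

theorem colScale_le (hπ : ∀ i j, 0 ≤ π i j) (c : Fin n → ℝ) (i j : Fin n) :
    colScale π c i j ≤ π i j := by
  rw [colScale_eq_swap_rowScale_swap]
  exact rowScale_le (fun j i => hπ i j) j i

theorem colSum_colScale (hπ : ∀ i j, 0 ≤ π i j) (hc : ∀ j, 0 ≤ c j) (j : Fin n) :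
    colSum (colScale π c) j = min (c j) (colSum π j) := by
  rw [colScale_eq_swap_rowScale_swap, colSum_swap]
  exact rowSum_rowScale (fun j i => hπ i j) hc j

noncomputable def fillMarginals (P : Fin n → Fin n → ℝ) (r c : Fin n → ℝ) :
    Fin n → Fin n → ℝ :=
  fun i j => P i j + (∑ i', |r i' - rowSum P i'|)⁻¹ * (r i - rowSum P i) * (c j - colSum P j)

theorem sum_abs_rowDefect {P : Fin n → Fin n → ℝ}
    (hr : ∀ i, rowSum P i ≤ r i) (hsum : ∑ i, r i = ∑ j, c j) :
    ∑ i, |r i - rowSum P i| = ∑ j, (c j - colSum P j) := by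
  simp only [abs_of_nonneg (sub_nonneg.2 (hr _)), sum_sub_distrib, hsum,
    sum_rowSum_eq_sum_colSum]

theorem fillMarginals_nonneg {P : Fin n → Fin n → ℝ} (hP : ∀ i j, 0 ≤ P i j)
    (hr : ∀ i, rowSum P i ≤ r i) (hc : ∀ j, colSum P j ≤ c j) (i j : Fin n) :
    0 ≤ fillMarginals P r c i j :=
  add_nonneg (hP i j) <| mul_nonneg
    (mul_nonneg (inv_nonneg.2 (sum_nonneg fun _ _ => abs_nonneg _)) (sub_nonneg.2 (hr i)))
    (sub_nonneg.2 (hc j))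

theorem rowSum_fillMarginals {P : Fin n → Fin n → ℝ}
    (hr : ∀ i, rowSum P i ≤ r i) (hsum : ∑ i, r i = ∑ j, c j) (i : Fin n) :
    rowSum (fillMarginals P r c) i = r i := by
  set Δ := ∑ i', |r i' - rowSum P i'| with hΔdef
  have hdefect : r i - rowSum P i ≤ Δ :=
    (le_abs_self _).trans
      (single_le_sum (f := fun i' => |r i' - rowSum P i'|) (fun _ _ => abs_nonneg _) (mem_univ i))
  calc rowSum (fillMarginals P r c) i
      = rowSum P i + Δ⁻¹ * (r i - rowSum P i) * ∑ j, (c j - colSum P j) := by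
        simp only [rowSum, fillMarginals, sum_add_distrib, ← mul_sum]
        rfl
    _ = r i := by
        rw [← sum_abs_rowDefect hr hsum, ← hΔdef, mul_right_comm,
          inv_mul_mul_of_nonneg_of_le (sub_nonneg.2 (hr i)) hdefect, add_sub_cancel]

theorem colSum_fillMarginals {P : Fin n → Fin n → ℝ}
    (hr : ∀ i, rowSum P i ≤ r i) (hc : ∀ j, colSum P j ≤ c j) (hsum : ∑ i, r i = ∑ j, c j)
    (j : Fin n) :
    colSum (fillMarginals P r c) j = c j := by
  set Δ := ∑ i', |r i' - rowSum P i'| with hΔdef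
  have hdefect : c j - colSum P j ≤ Δ := by
    rw [hΔdef, sum_abs_rowDefect hr hsum]
    exact single_le_sum (fun j _ => sub_nonneg.2 (hc j)) (mem_univ j)
  calc colSum (fillMarginals P r c) j
      = colSum P j + Δ⁻¹ * (∑ i, (r i - rowSum P i)) * (c j - colSum P j) := by
        simp only [colSum, fillMarginals, sum_add_distrib, ← sum_mul, ← mul_sum]
        rfl
    _ = colSum P j + Δ⁻¹ * Δ * (c j - colSum P j) := by
        simp only [hΔdef, abs_of_nonneg (sub_nonneg.2 (hr _))]
    _ = c j := by
        rw [inv_mul_mul_of_nonneg_of_le (sub_nonneg.2 (hc j)) hdefect, add_sub_cancel]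

theorem sum_sum_abs_fillMarginals_sub {P : Fin n → Fin n → ℝ}
    (hr : ∀ i, rowSum P i ≤ r i) (hc : ∀ j, colSum P j ≤ c j) (hsum : ∑ i, r i = ∑ j, c j) :
    ∑ i, ∑ j, |fillMarginals P r c i j - P i j| = ∑ j, (c j - colSum P j) := by
  set Δ := ∑ i', |r i' - rowSum P i'| with hΔdef
  calc ∑ i, ∑ j, |fillMarginals P r c i j - P i j|
      = ∑ i, ∑ j, Δ⁻¹ * (r i - rowSum P i) * (c j - colSum P j) :=
        sum_congr rfl fun i _ => sum_congr rfl fun j _ => by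
          rw [fillMarginals, add_sub_cancel_left, abs_of_nonneg]
          exact mul_nonneg (mul_nonneg (inv_nonneg.2 (sum_nonneg fun _ _ => abs_nonneg _))
            (sub_nonneg.2 (hr i))) (sub_nonneg.2 (hc j))
    _ = Δ⁻¹ * (∑ i, |r i - rowSum P i|) * ∑ j, (c j - colSum P j) := by
        simp only [abs_of_nonneg (sub_nonneg.2 (hr _)), mul_sum, sum_mul]
        exact sum_comm
    _ = ∑ j, (c j - colSum P j) := by
        rw [← hΔdef, inv_mul_mul_of_nonneg_of_le (sum_nonneg fun j _ => sub_nonneg.2 (hc j))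
          (sum_abs_rowDefect hr hsum).ge]

theorem roundPlan_eq_fillMarginals (π : Fin n → Fin n → ℝ) (r c : Fin n → ℝ) :
    roundPlan π r c = fillMarginals (colScale (rowScale π r) c) r c :=
  rfl

theorem rowSum_colScale_rowScale_le (hπ : ∀ i j, 0 ≤ π i j) (hr : ∀ i, 0 ≤ r i) (i : Fin n) :
    rowSum (colScale (rowScale π r) c) i ≤ r i :=
  (rowSum_mono (colScale_le (rowScale_nonneg hπ hr) c) i).trans
    ((rowSum_rowScale hπ hr i).le.trans (min_le_left _ _))

theorem colSum_colScale_le (hπ : ∀ i j, 0 ≤ π i j) (hc : ∀ j, 0 ≤ c j) (j : Fin n) :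
    colSum (colScale π c) j ≤ c j :=
  (colSum_colScale hπ hc j).le.trans (min_le_left _ _)

theorem roundPlan_nonneg (hπ : ∀ i j, 0 ≤ π i j) (hr : ∀ i, 0 ≤ r i) (hc : ∀ j, 0 ≤ c j)
    (i j : Fin n) : 0 ≤ roundPlan π r c i j :=
  fillMarginals_nonneg (colScale_nonneg (rowScale_nonneg hπ hr) hc)
    (rowSum_colScale_rowScale_le hπ hr) (colSum_colScale_le (rowScale_nonneg hπ hr) hc) i j

theorem rowSum_roundPlan (hπ : ∀ i j, 0 ≤ π i j) (hr : ∀ i, 0 ≤ r i)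
    (hsum : ∑ i, r i = ∑ j, c j) (i : Fin n) : rowSum (roundPlan π r c) i = r i :=
  rowSum_fillMarginals (rowSum_colScale_rowScale_le hπ hr) hsum i

theorem colSum_roundPlan (hπ : ∀ i j, 0 ≤ π i j) (hr : ∀ i, 0 ≤ r i) (hc : ∀ j, 0 ≤ c j)
    (hsum : ∑ i, r i = ∑ j, c j) (j : Fin n) : colSum (roundPlan π r c) j = c j :=
  colSum_fillMarginals (rowSum_colScale_rowScale_le hπ hr)
    (colSum_colScale_le (rowScale_nonneg hπ hr) hc) hsum j

theorem sum_sum_abs_roundPlan_sub_le (hπ : ∀ i j, 0 ≤ π i j) (hrow : ∀ i, rowSum π i ≤ r i)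
    (hc : ∀ j, 0 ≤ c j) (hsum : ∑ i, r i = ∑ j, c j) :
    ∑ i, ∑ j, |roundPlan π r c i j - π i j| ≤ ∑ j, |colSum π j - c j| := by
  have hround : roundPlan π r c = fillMarginals (colScale π c) r c := by
    rw [roundPlan_eq_fillMarginals, rowScale_eq_self hπ hrow]
  have hProw : ∀ i, rowSum (colScale π c) i ≤ r i := fun i =>
    (rowSum_mono (colScale_le hπ c) i).trans (hrow i)
  calc ∑ i, ∑ j, |roundPlan π r c i j - π i j|
      ≤ ∑ i, ∑ j, (|roundPlan π r c i j - colScale π c i j| + |π i j - colScale π c i j|) := by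
        gcongr with i _ j _
        exact (abs_sub_le _ _ _).trans_eq (by rw [abs_sub_comm (colScale π c i j)])
    _ = ∑ j, (c j - colSum (colScale π c) j) + ∑ j, (colSum π j - colSum (colScale π c) j) := by
        simp only [sum_add_distrib]
        rw [hround, sum_sum_abs_fillMarginals_sub hProw (colSum_colScale_le hπ hc) hsum,
          sum_sum_abs_sub_of_le (colScale_le hπ c)]
    _ = ∑ j, |colSum π j - c j| := by
        rw [← sum_add_distrib]
        refine sum_congr rfl fun j _ => ?_
        rw [colSum_colScale hπ hc, abs_sub_comm, ← max_sub_min_eq_abs']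
        linarith [min_add_max (c j) (colSum π j)]

end

theorem stmt_9_general (n : ℕ)
    (C : Fin n → Fin n → ℝ)
    (Cinf : ℝ) (hCinf : IsGreatest (Set.range fun p : Fin n × Fin n => |C p.1 p.2|) Cinf)
    (r c : Fin n → ℝ) (hr0 : ∀ i, 0 ≤ r i) (hr1 : ∑ i, r i = 1)
    (hc0 : ∀ j, 0 ≤ c j) (hc1 : ∑ j, c j = 1)
    (F : (Fin n → Fin n → ℝ) → ℝ)
    (hF : ∀ π, F π = (∑ i, ∑ j, π i j * C i j) + 2 * Cinf * ∑ j, |colSum π j - c j|)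
    (pstar : Fin n → Fin n → ℝ) (hp0 : ∀ i j, 0 ≤ pstar i j) (hp1 : ∀ i, ∑ j, pstar i j = 1) :
    (∀ i j, 0 ≤ roundPlan (fun i j => r i * pstar i j) r c i j) ∧
    (∀ i, rowSum (roundPlan (fun i j => r i * pstar i j) r c) i = r i) ∧
    (∀ j, colSum (roundPlan (fun i j => r i * pstar i j) r c) j = c j) ∧
    F (roundPlan (fun i j => r i * pstar i j) r c) ≤ F (fun i j => r i * pstar i j) := by
  set π : Fin n → Fin n → ℝ := fun i j => r i * pstar i j
  have hπ : ∀ i j, 0 ≤ π i j := fun i j => mul_nonneg (hr0 i) (hp0 i j)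
  have hrow : ∀ i, rowSum π i = r i := fun i => by simp only [rowSum, π, ← mul_sum, hp1, mul_one]
  have hsum : ∑ i, r i = ∑ j, c j := hr1.trans hc1.symm
  have hcol := colSum_roundPlan hπ hr0 hc0 hsum
  refine ⟨roundPlan_nonneg hπ hr0 hc0, rowSum_roundPlan hπ hr0 hsum, hcol, ?_⟩
  have hCle : ∀ i j, |C i j| ≤ Cinf := fun i j => hCinf.2 ⟨(i, j), rfl⟩
  have hCinf0 : 0 ≤ Cinf := by
    obtain ⟨_, hCij⟩ := hCinf.1
    exact hCij ▸ abs_nonneg _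
  have hmarginal : 0 ≤ ∑ j, |colSum π j - c j| := sum_nonneg fun _ _ => abs_nonneg _
  rw [hF, hF]
  simp only [hcol, sub_self, abs_zero, sum_const_zero, mul_zero, add_zero]
  calc ∑ i, ∑ j, roundPlan π r c i j * C i j
      ≤ ∑ i, ∑ j, π i j * C i j + Cinf * ∑ i, ∑ j, |roundPlan π r c i j - π i j| :=
        sum_sum_mul_le_add_mul_sum_sum_abs hCle _ _
    _ ≤ ∑ i, ∑ j, π i j * C i j + Cinf * ∑ j, |colSum π j - c j| :=
        add_le_add_right (mul_le_mul_of_nonneg_left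
          (sum_sum_abs_roundPlan_sub_le hπ (fun i => (hrow i).le) hc0 hsum) hCinf0) _
    _ ≤ ∑ i, ∑ j, π i j * C i j + 2 * Cinf * ∑ j, |colSum π j - c j| := by nlinarith

/-- Rounding a minimizer of the penalized OT objective yields a feasible coupling
that is also a minimizer. -/
theorem stmt_9 (n : ℕ) (hn : 0 < n)
    (C : Fin n → Fin n → ℝ) (hC : ∀ i j, 0 ≤ C i j)
    (Cinf : ℝ) (hCinf : IsGreatest (Set.range fun p : Fin n × Fin n => |C p.1 p.2|) Cinf)
    (r c : Fin n → ℝ) (hr0 : ∀ i, 0 ≤ r i) (hr1 : ∑ i, r i = 1)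
    (hc0 : ∀ j, 0 ≤ c j) (hc1 : ∑ j, c j = 1)
    (F : (Fin n → Fin n → ℝ) → ℝ)
    (hF : ∀ π, F π = (∑ i, ∑ j, π i j * C i j) + 2 * Cinf * ∑ j, |colSum π j - c j|)
    (pstar : Fin n → Fin n → ℝ) (hp0 : ∀ i j, 0 ≤ pstar i j) (hp1 : ∀ i, ∑ j, pstar i j = 1)
    (hmin : ∀ p : Fin n → Fin n → ℝ, (∀ i j, 0 ≤ p i j) → (∀ i, ∑ j, p i j = 1) →
      F (fun i j => r i * pstar i j) ≤ F (fun i j => r i * p i j)) :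
    (∀ i j, 0 ≤ roundPlan (fun i j => r i * pstar i j) r c i j) ∧
    (∀ i, rowSum (roundPlan (fun i j => r i * pstar i j) r c) i = r i) ∧
    (∀ j, colSum (roundPlan (fun i j => r i * pstar i j) r c) j = c j) ∧
    F (roundPlan (fun i j => r i * pstar i j) r c) ≤ F (fun i j => r i * pstar i j) :=
  stmt_9_general n C Cinf hCinf r c hr0 hr1 hc0 hc1 F hF pstar hp0 hp1
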